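/- arXiv:1903.03934 — 2 statements merged into one kernel-verified Lean document; each statement's English description precedes it below -/
import Mathlib

section
/- Let E be a real inner product space, let u, v, w ∈ E, and let ρ ≥ 0, ε ≥ 0, V₁ ≥ 0 be real numbers with ‖u‖² ≤ V₁ and ‖v‖² ≤ V₁. If in addition ρ²‖w‖² − (ρ/2)‖w‖² ≥ (1 + 2ρ + ε)·V₁, then ⟨u + ρ·w, v + ρ·w⟩ ≥ ε‖u‖². -/
open RealInnerProductSpace

/-- If `‖u‖² ≤ V₁`, `‖v‖² ≤ V₁` and `ρ²‖w‖² − (ρ/2)‖w‖² ≥ (1 + 2ρ + ε)V₁`,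
then `⟨u + ρw, v + ρw⟩ ≥ ε‖u‖²`. -/
theorem fedasync_alignment_condition
    {E : Type*} [NormedAddCommGroup E] [InnerProductSpace ℝ E]
    (u v w : E) (ρ ε V₁ : ℝ)
    (hρ : 0 ≤ ρ) (hε : 0 ≤ ε) (hV₁ : 0 ≤ V₁)
    (hu : ‖u‖ ^ 2 ≤ V₁) (hv : ‖v‖ ^ 2 ≤ V₁)
    (hbig : ρ ^ 2 * ‖w‖ ^ 2 - (ρ / 2) * ‖w‖ ^ 2 ≥ (1 + 2 * ρ + ε) * V₁) :
    ⟪u + ρ • w, v + ρ • w⟫ ≥ ε * ‖u‖ ^ 2 := by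
  have hexp : ⟪u + ρ • w, v + ρ • w⟫
      = ⟪u, v⟫ + ρ * ⟪u, w⟫ + ρ * ⟪w, v⟫ + ρ ^ 2 * ‖w‖ ^ 2 := by
    simp [inner_add_add_self, inner_add_left, inner_add_right, real_inner_smul_left,
      real_inner_smul_right, real_inner_self_eq_norm_sq, norm_smul, mul_pow, abs_of_nonneg hρ]
    ring
  have h1 : |⟪u, v⟫| ≤ ‖u‖ * ‖v‖ := abs_real_inner_le_norm u v
  have h2 : |⟪u, w⟫| ≤ ‖u‖ * ‖w‖ := abs_real_inner_le_norm u w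
  have h3 : |⟪w, v⟫| ≤ ‖w‖ * ‖v‖ := abs_real_inner_le_norm w v
  have h1' := abs_le.mp h1
  have h2' := abs_le.mp h2
  have h3' := abs_le.mp h3
  rw [hexp]
  nlinarith [sq_nonneg (‖u‖ - ‖w‖ / 2), sq_nonneg (‖v‖ - ‖w‖ / 2),
    sq_nonneg (‖u‖ - ‖v‖), mul_nonneg hρ (norm_nonneg w), norm_nonneg u, norm_nonneg v,
    mul_le_mul_of_nonneg_left h2'.1 hρ, mul_le_mul_of_nonneg_left h3'.1 hρ,
    mul_nonneg hε (sq_nonneg ‖u‖)]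
end

section
/- Let E be a real inner product space, F : E → ℝ, ρ ≥ 0, x' ∈ E, and suppose the regularized objective G_{x'}(x) = F(x) + (ρ/2)‖x − x'‖² is convex. Then for every α ∈ [0, 1] and all y, z ∈ E, F((1 − α)·x' + α·y) − F(x') ≤ α·(F(y) − F(x')) + αρ·‖y − z‖² + αρ·‖z − x'‖². -/
/-- If the regularized objective `G_{x'}(x) = F x + (ρ/2)‖x − x'‖²` is
convex, then for every `α ∈ [0,1]` and all `y, z`,
`F((1 − α)x' + αy) − F x' ≤ α(F y − F x') + αρ‖y − z‖² + αρ‖z − x'‖²`. -/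
theorem fedasync_mixing_bound_split
    {E : Type*} [NormedAddCommGroup E] [InnerProductSpace ℝ E]
    (F : E → ℝ) (ρ : ℝ) (hρ : 0 ≤ ρ) (x' : E)
    (hG : ConvexOn ℝ Set.univ (fun x => F x + ρ / 2 * ‖x - x'‖ ^ 2))
    (α : ℝ) (hα0 : 0 ≤ α) (hα1 : α ≤ 1) (y z : E) :
    F ((1 - α) • x' + α • y) - F x' ≤
      α * (F y - F x') + α * ρ * ‖y - z‖ ^ 2 + α * ρ * ‖z - x'‖ ^ 2 := by
  have h1 : (0:ℝ) ≤ 1 - α := by linarith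
  have hc := hG.2 (Set.mem_univ x') (Set.mem_univ y) h1 hα0 (by ring)
  simp only at hc
  have hpt : (1 - α) • x' + α • y - x' = α • (y - x') := by
    rw [smul_sub]; module
  rw [hpt, sub_self, norm_zero, norm_smul] at hc
  have hns : ‖α‖ = α := abs_of_nonneg hα0
  rw [hns] at hc
  simp only [smul_eq_mul] at hc
  -- hc : F pt + ρ/2 * (α * ‖y - x'‖)^2 ≤ (1-α)*(F x' + ρ/2*0^2) + α*(F y + ρ/2*‖y-x'‖^2)
  have key : F ((1 - α) • x' + α • y) - F x' ≤ α * (F y - F x') + α * ρ / 2 * ‖y - x'‖ ^ 2 := by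
    nlinarith [sq_nonneg (‖y - x'‖), mul_nonneg (mul_nonneg hα0 hα0) (mul_nonneg hρ (sq_nonneg ‖y - x'‖))]
  have htri : ‖y - x'‖ ^ 2 ≤ 2 * ‖y - z‖ ^ 2 + 2 * ‖z - x'‖ ^ 2 := by
    have h := norm_add_le (y - z) (z - x')
    have he : y - z + (z - x') = y - x' := by abel
    rw [he] at h
    have h2 := pow_le_pow_left₀ (norm_nonneg _) h 2
    nlinarith [sq_nonneg (‖y - z‖ - ‖z - x'‖)]
  nlinarith [mul_nonneg hα0 hρ]
end
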